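/- Let θ>0, 1<p<∞, 0<α<1/p, q=p/(1−αp), and let w be a weight on [0,1]. Suppose there is a constant c>0 such that the one-weight inequality ‖I_α(f w^α)‖_{L^{q),θ}_w([0,1])} ≤ c‖f‖_{L^{p),θ}_w([0,1])} holds for all nonnegative measurable f on [0,1]. Then ∫₀¹ w(x)^{−p'/q} dx < ∞, where p' = p/(p−1). -/

import Mathlib

open MeasureTheory Set
open scoped ENNReal

/-- Weighted grand Lebesgue norm on `[0,1]` of an `ℝ≥0∞`-valued function:
`sup_{0<ε<p-1} (ε^θ ∫₀¹ f^{p-ε} w)^{1/(p-ε)}`. -/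
noncomputable def grandNormWE (p θ : ℝ) (w : ℝ → ℝ) (f : ℝ → ℝ≥0∞) : ℝ≥0∞ :=
  ⨆ ε ∈ Set.Ioo (0 : ℝ) (p - 1),
    (ENNReal.ofReal (ε ^ θ) *
      ∫⁻ t in Set.Icc (0 : ℝ) 1, f t ^ (p - ε) * ENNReal.ofReal (w t)) ^ (1 / (p - ε))

/-- Weighted grand Lebesgue norm on `[0,1]` of a real function. -/
noncomputable def grandNormW (p θ : ℝ) (w f : ℝ → ℝ) : ℝ≥0∞ :=
  grandNormWE p θ w (fun t => ENNReal.ofReal |f t|)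

/-- The Riesz potential `(I_α g)(x) = ∫₀¹ g(y)/|x-y|^{1-α} dy` of a nonnegative
function, with values in `ℝ≥0∞`. -/
noncomputable def rieszPotential (α : ℝ) (g : ℝ → ℝ) (x : ℝ) : ℝ≥0∞ :=
  ∫⁻ y in Set.Icc (0 : ℝ) 1, ENNReal.ofReal (g y) / ENNReal.ofReal (|x - y| ^ (1 - α))

/-- **Lemma 3.5.** Let `θ>0`, `1<p<∞`, `0<α<1/p`, `q=p/(1-αp)`, and let `w` be a weight on
`[0,1]`. If the one-weight inequality
`‖I_α(f w^α)‖_{L^{q),θ}_w} ≤ c ‖f‖_{L^{p),θ}_w}`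
holds for all nonnegative measurable `f`, then `∫₀¹ w^{-p'/q} < ∞`, where `p' = p/(p-1)`. -/
theorem one_weight_ineq_implies_finite_integral (α p q θ : ℝ) (w : ℝ → ℝ)
    (hθ : 0 < θ) (hp : 1 < p) (hα0 : 0 < α) (hα1 : α < 1 / p)
    (hq : q = p / (1 - α * p))
    (hw_meas : Measurable w)
    (hw_pos : ∀ᵐ x ∂(volume.restrict (Set.Icc (0 : ℝ) 1)), 0 < w x)
    (hw_int : IntegrableOn w (Set.Icc (0 : ℝ) 1))
    (hbound : ∃ c : ℝ, 0 < c ∧ ∀ f : ℝ → ℝ, Measurable f → (∀ x, 0 ≤ f x) →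
      grandNormWE q θ w (rieszPotential α (fun y => f y * w y ^ α)) ≤
        ENNReal.ofReal c * grandNormW p θ w f) :
    (∫⁻ x in Set.Icc (0 : ℝ) 1, ENNReal.ofReal (w x ^ (-(p / (p - 1)) / q))) < ⊤ := by
  obtain ⟨c, hc, hb⟩ := hbound
  have hp0 : (0:ℝ) < p := lt_trans one_pos hp
  have hp1 : (0:ℝ) < p - 1 := by linarith
  have h1ap : 0 < 1 - α * p := by
    have := (lt_div_iff₀ hp0).mp hα1; linarith
  have hq1 : 1 < q := by rw [hq, lt_div_iff₀ h1ap]; nlinarith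
  have hα1' : α < 1 := by
    have : 1 / p < 1 := by rw [div_lt_one hp0]; linarith
    linarith
  set β : ℝ := (1 - α)/(p - 1) with hβ
  have hβpos : 0 < β := div_pos (by linarith) hp1
  have hβe : -β * (p - 1) = α - 1 := by rw [hβ]; field_simp; ring
  have hexp : α - β = -(p / (p - 1)) / q := by
    rw [hq, hβ]; field_simp; ring
  -- the weight's integral
  set W : ℝ≥0∞ := ∫⁻ t in Icc (0:ℝ) 1, ENNReal.ofReal (w t) with hW
  have hWlt : W < ⊤ := hw_int.lintegral_lt_top
  have hW0 : W ≠ 0 := by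
    intro h0
    have h1 := (lintegral_eq_zero_iff (by fun_prop)).mp h0
    have : ∀ᵐ x ∂(volume.restrict (Icc (0:ℝ) 1)), False := by
      filter_upwards [hw_pos, h1] with x hx h0x
      simp only [Pi.zero_apply, ENNReal.ofReal_eq_zero] at h0x
      linarith
    rw [ae_iff] at this
    simp only [not_false_eq_true, setOf_true, Measure.restrict_apply, univ_inter,
      MeasurableSet.univ] at this
    rw [Real.volume_Icc] at this
    simp at this
  -- test functions
  set fN : ℕ → ℝ → ℝ := fun n x => min ((max (w x) 0) ^ (-β)) (n:ℝ) with hfN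
  have hfN_meas : ∀ n, Measurable (fN n) := by intro n; fun_prop
  have hfN_nonneg : ∀ n x, 0 ≤ fN n x := by
    intro n x
    exact le_min (Real.rpow_nonneg (le_max_right _ _) _) (Nat.cast_nonneg n)
  set A : ℕ → ℝ≥0∞ := fun n => ∫⁻ y in Icc (0:ℝ) 1,
    ENNReal.ofReal (fN n y * w y ^ α) with hA
  -- finiteness of A n
  have hwα_int : (∫⁻ y in Icc (0:ℝ) 1, ENNReal.ofReal (w y ^ α)) < ⊤ := by
    have h : ∀ᵐ y ∂(volume.restrict (Icc (0:ℝ) 1)),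
        ENNReal.ofReal (w y ^ α) ≤ 1 + ENNReal.ofReal (w y) := by
      filter_upwards [hw_pos] with y hy
      have h2 : w y ^ α ≤ 1 + w y := by
        rcases le_total (w y) 1 with h | h
        · have := Real.rpow_le_one hy.le h hα0.le; linarith
        · have := Real.rpow_le_rpow_of_exponent_le h hα1'.le
          rw [Real.rpow_one] at this; linarith
      calc ENNReal.ofReal (w y ^ α) ≤ ENNReal.ofReal (1 + w y) :=
            ENNReal.ofReal_le_ofReal h2
        _ = 1 + ENNReal.ofReal (w y) := by
            rw [ENNReal.ofReal_add one_pos.le hy.le]; simp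
    calc (∫⁻ y in Icc (0:ℝ) 1, ENNReal.ofReal (w y ^ α))
        ≤ ∫⁻ y in Icc (0:ℝ) 1, (1 + ENNReal.ofReal (w y)) := lintegral_mono_ae h
      _ = (volume.restrict (Icc (0:ℝ) 1)) univ + W := by
          rw [lintegral_add_left measurable_const, lintegral_const, one_mul]
      _ < ⊤ := by
          rw [Measure.restrict_apply_univ, Real.volume_Icc]
          exact ENNReal.add_lt_top.mpr ⟨ENNReal.ofReal_lt_top, hWlt⟩
  have hAlt : ∀ n, A n < ⊤ := by
    intro n
    have h : ∀ᵐ y ∂(volume.restrict (Icc (0:ℝ) 1)),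
        ENNReal.ofReal (fN n y * w y ^ α) ≤
          ENNReal.ofReal (n:ℝ) * ENNReal.ofReal (w y ^ α) := by
      filter_upwards [hw_pos] with y hy
      rw [← ENNReal.ofReal_mul (Nat.cast_nonneg n)]
      exact ENNReal.ofReal_le_ofReal
        (mul_le_mul_of_nonneg_right (min_le_right _ _) (Real.rpow_nonneg hy.le _))
    calc A n ≤ ∫⁻ y in Icc (0:ℝ) 1, ENNReal.ofReal (n:ℝ) * ENNReal.ofReal (w y ^ α) :=
          lintegral_mono_ae h
      _ = ENNReal.ofReal (n:ℝ) * ∫⁻ y in Icc (0:ℝ) 1, ENNReal.ofReal (w y ^ α) :=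
          lintegral_const_mul' _ _ ENNReal.ofReal_ne_top
      _ < ⊤ := ENNReal.mul_lt_top ENNReal.ofReal_lt_top hwα_int
  -- pointwise comparison : B ≤ A
  have hBA : ∀ n, (∫⁻ t in Icc (0:ℝ) 1,
      ENNReal.ofReal |fN n t| ^ p * ENNReal.ofReal (w t)) ≤ A n := by
    intro n
    apply lintegral_mono_ae
    filter_upwards [hw_pos] with t ht
    have hm : 0 ≤ fN n t := hfN_nonneg n t
    rw [abs_of_nonneg hm, ENNReal.ofReal_rpow_of_nonneg hm hp0.le,
      ← ENNReal.ofReal_mul (Real.rpow_nonneg hm p)]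
    apply ENNReal.ofReal_le_ofReal
    have hmle : fN n t ≤ w t ^ (-β) := by
      have : max (w t) 0 = w t := max_eq_left ht.le
      rw [hfN]; simp only [this]; exact min_le_left _ _
    rcases eq_or_lt_of_le hm with h0 | h0
    · rw [← h0, Real.zero_rpow hp0.ne', zero_mul, zero_mul]
    · have hstep : fN n t ^ (p - 1) ≤ w t ^ (α - 1) := by
        calc fN n t ^ (p - 1) ≤ (w t ^ (-β)) ^ (p - 1) :=
              Real.rpow_le_rpow hm hmle (by linarith)
          _ = w t ^ (-β * (p - 1)) := by rw [← Real.rpow_mul ht.le]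
          _ = w t ^ (α - 1) := by rw [hβe]
      calc fN n t ^ p * w t = fN n t ^ (p - 1) * fN n t * w t := by
            rw [← Real.rpow_add_one h0.ne' (p-1)]; ring_nf
        _ ≤ w t ^ (α - 1) * fN n t * w t := by
            have := mul_le_mul_of_nonneg_right hstep hm
            exact mul_le_mul_of_nonneg_right this ht.le
        _ = fN n t * (w t ^ (α - 1) * w t ^ (1:ℝ)) := by rw [Real.rpow_one]; ring
        _ = fN n t * w t ^ α := by rw [← Real.rpow_add ht]; norm_num
  -- upper bound for the grand norm of fN n
  set K : ℝ≥0∞ := ENNReal.ofReal (max 1 ((p-1)^θ)) * (max 1 W) with hK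
  have hKlt : K < ⊤ :=
    ENNReal.mul_lt_top ENNReal.ofReal_lt_top (max_lt ENNReal.one_lt_top hWlt)
  have hRHS : ∀ n, grandNormW p θ w (fN n) ≤ K * (A n) ^ (1/p) := by
    intro n
    set B : ℝ≥0∞ := ∫⁻ t in Icc (0:ℝ) 1,
      ENNReal.ofReal |fN n t| ^ p * ENNReal.ofReal (w t) with hBdef
    rw [grandNormW, grandNormWE]
    apply iSup₂_le
    intro ε hε
    obtain ⟨hε0, hεlt⟩ := hε
    have hpε : 1 < p - ε := by linarith
    -- Hölder
    have conj : Real.HolderConjugate (p/(p-ε)) (p/ε) := by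
      rw [Real.holderConjugate_iff]; constructor
      · rw [lt_div_iff₀ (by linarith : (0:ℝ) < p - ε)]; linarith
      · rw [inv_div, inv_div]; field_simp; ring
    set F1 : ℝ → ℝ≥0∞ := fun t =>
      ENNReal.ofReal |fN n t| ^ (p-ε) * ENNReal.ofReal (w t) ^ ((p-ε)/p) with hF1def
    set F2 : ℝ → ℝ≥0∞ := fun t => ENNReal.ofReal (w t) ^ (ε/p) with hF2def
    have hm1 : AEMeasurable F1 (volume.restrict (Icc (0:ℝ) 1)) := by
      rw [hF1def]
      exact (((hfN_meas n).abs.ennreal_ofReal.pow_const _).mul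
        (hw_meas.ennreal_ofReal.pow_const _)).aemeasurable
    have hm2 : AEMeasurable F2 (volume.restrict (Icc (0:ℝ) 1)) := by
      rw [hF2def]
      exact (hw_meas.ennreal_ofReal.pow_const _).aemeasurable
    have hH := ENNReal.lintegral_mul_le_Lp_mul_Lq
      (volume.restrict (Icc (0:ℝ) 1)) conj hm1 hm2
    have hptw : ∀ t, ENNReal.ofReal |fN n t| ^ (p-ε) * ENNReal.ofReal (w t)
        = (F1 * F2) t := by
      intro t
      simp only [hF1def, hF2def, Pi.mul_apply]
      rw [mul_assoc, ← ENNReal.rpow_add_of_nonneg _ _ (by positivity) (by positivity),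
        ← add_div, sub_add_cancel, div_self hp0.ne', ENNReal.rpow_one]
    have hF1r : ∀ t, F1 t ^ (p/(p-ε))
        = ENNReal.ofReal |fN n t| ^ p * ENNReal.ofReal (w t) := by
      intro t
      simp only [hF1def]
      rw [ENNReal.mul_rpow_of_nonneg _ _ (by positivity),
        ← ENNReal.rpow_mul, ← ENNReal.rpow_mul,
        show (p-ε) * (p/(p-ε)) = p by field_simp,
        show ((p-ε)/p) * (p/(p-ε)) = 1 by field_simp,
        ENNReal.rpow_one]
    have hF2r : ∀ t, F2 t ^ (p/ε) = ENNReal.ofReal (w t) := by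
      intro t
      simp only [hF2def]
      rw [← ENNReal.rpow_mul, show (ε/p) * (p/ε) = 1 by field_simp, ENNReal.rpow_one]
    have hhold : (∫⁻ t in Icc (0:ℝ) 1,
        ENNReal.ofReal |fN n t| ^ (p-ε) * ENNReal.ofReal (w t))
          ≤ B ^ ((p-ε)/p) * W ^ (ε/p) := by
      calc (∫⁻ t in Icc (0:ℝ) 1,
            ENNReal.ofReal |fN n t| ^ (p-ε) * ENNReal.ofReal (w t))
          = ∫⁻ t in Icc (0:ℝ) 1, (F1 * F2) t := by
            exact lintegral_congr fun t => hptw t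
        _ ≤ (∫⁻ t in Icc (0:ℝ) 1, F1 t ^ (p/(p-ε))) ^ (1/(p/(p-ε))) *
              (∫⁻ t in Icc (0:ℝ) 1, F2 t ^ (p/ε)) ^ (1/(p/ε)) := hH
        _ = B ^ ((p-ε)/p) * W ^ (ε/p) := by
            rw [lintegral_congr hF1r, lintegral_congr hF2r,
              one_div, inv_div, one_div, inv_div, hBdef, hW]
    -- put things together
    have h1p : (0:ℝ) < 1/(p-ε) := by positivity
    have hK1 : (ENNReal.ofReal (ε^θ)) ^ (1/(p-ε)) ≤ ENNReal.ofReal (max 1 ((p-1)^θ)) := by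
      have hb1 : ENNReal.ofReal (ε^θ) ≤ ENNReal.ofReal (max 1 ((p-1)^θ)) :=
        ENNReal.ofReal_le_ofReal
          (le_trans (Real.rpow_le_rpow hε0.le hεlt.le hθ.le) (le_max_right _ _))
      calc (ENNReal.ofReal (ε^θ)) ^ (1/(p-ε))
          ≤ (ENNReal.ofReal (max 1 ((p-1)^θ))) ^ (1/(p-ε)) :=
            ENNReal.rpow_le_rpow hb1 h1p.le
        _ ≤ (ENNReal.ofReal (max 1 ((p-1)^θ))) ^ (1:ℝ) := by
            apply ENNReal.rpow_le_rpow_of_exponent_le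
            · exact ENNReal.one_le_ofReal.mpr (le_max_left _ _)
            · rw [div_le_one (by linarith)]; linarith
        _ = ENNReal.ofReal (max 1 ((p-1)^θ)) := ENNReal.rpow_one _
    have hK2 : W ^ (ε/(p*(p-ε))) ≤ max 1 W := by
      calc W ^ (ε/(p*(p-ε))) ≤ (max 1 W) ^ (ε/(p*(p-ε))) :=
            ENNReal.rpow_le_rpow (le_max_right _ _) (by positivity)
        _ ≤ (max 1 W) ^ (1:ℝ) := by
            apply ENNReal.rpow_le_rpow_of_exponent_le (le_max_left _ _)
            rw [div_le_one (by positivity)]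
            nlinarith
        _ = max 1 W := ENNReal.rpow_one _
    calc (ENNReal.ofReal (ε^θ) * ∫⁻ t in Icc (0:ℝ) 1,
          ENNReal.ofReal |fN n t| ^ (p-ε) * ENNReal.ofReal (w t)) ^ (1/(p-ε))
        ≤ (ENNReal.ofReal (ε^θ) * (B ^ ((p-ε)/p) * W ^ (ε/p))) ^ (1/(p-ε)) :=
          ENNReal.rpow_le_rpow (mul_le_mul_right hhold _) h1p.le
      _ = (ENNReal.ofReal (ε^θ)) ^ (1/(p-ε)) *
            (B ^ (1/p) * W ^ (ε/(p*(p-ε)))) := by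
          rw [ENNReal.mul_rpow_of_nonneg _ _ h1p.le,
            ENNReal.mul_rpow_of_nonneg _ _ h1p.le,
            ← ENNReal.rpow_mul, ← ENNReal.rpow_mul,
            show ((p-ε)/p) * (1/(p-ε)) = 1/p by field_simp,
            show (ε/p) * (1/(p-ε)) = ε/(p*(p-ε)) by field_simp]
      _ ≤ ENNReal.ofReal (max 1 ((p-1)^θ)) * ((A n) ^ (1/p) * max 1 W) := by
          exact mul_le_mul' hK1
            (mul_le_mul' (ENNReal.rpow_le_rpow (hBA n) (by positivity)) hK2)
      _ = K * (A n) ^ (1/p) := by rw [hK]; ring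
  -- lower bound for the grand norm of the Riesz potential
  set ε₁ : ℝ := (q-1)/2 with hε₁
  have hε₁0 : 0 < ε₁ := by rw [hε₁]; linarith
  have hε₁lt : ε₁ < q - 1 := by rw [hε₁]; linarith
  have hqε : 0 < q - ε₁ := by rw [hε₁]; linarith
  set κ : ℝ≥0∞ := (ENNReal.ofReal (ε₁^θ) * W) ^ (1/(q-ε₁)) with hκ
  have hbase0 : ENNReal.ofReal (ε₁^θ) * W ≠ 0 := by
    apply mul_ne_zero _ hW0
    simp only [ne_eq, ENNReal.ofReal_eq_zero, not_le]
    positivity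
  have hbaset : ENNReal.ofReal (ε₁^θ) * W ≠ ⊤ :=
    ENNReal.mul_ne_top ENNReal.ofReal_ne_top hWlt.ne
  have hκ0 : κ ≠ 0 := by
    rw [hκ]; simp [ENNReal.rpow_eq_zero_iff, hbase0, hbaset]
  have hκt : κ ≠ ⊤ :=
    (ENNReal.rpow_lt_top_of_nonneg (by positivity) hbaset).ne
  have hLHS : ∀ n, κ * A n ≤
      grandNormWE q θ w (rieszPotential α (fun y => fN n y * w y ^ α)) := by
    intro n
    have hmem : ε₁ ∈ Ioo (0:ℝ) (q-1) := ⟨hε₁0, hε₁lt⟩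
    have step1 : ∀ x ∈ Icc (0:ℝ) 1, A n ≤
        rieszPotential α (fun y => fN n y * w y ^ α) x := by
      intro x hx
      rw [hA]
      unfold rieszPotential
      apply lintegral_mono_ae
      filter_upwards [ae_restrict_mem measurableSet_Icc] with y hy
      have hxy : |x - y| ≤ 1 := by
        obtain ⟨hx1, hx2⟩ := hx; obtain ⟨hy1, hy2⟩ := hy
        rw [abs_le]; constructor <;> linarith
      have hker : ENNReal.ofReal (|x - y| ^ (1-α)) ≤ 1 := by
        rw [show (1:ℝ≥0∞) = ENNReal.ofReal 1 by simp]
        exact ENNReal.ofReal_le_ofReal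
          (Real.rpow_le_one (abs_nonneg _) hxy (by linarith))
      calc ENNReal.ofReal (fN n y * w y ^ α)
          = ENNReal.ofReal (fN n y * w y ^ α) / 1 := by simp
        _ ≤ ENNReal.ofReal (fN n y * w y ^ α) / ENNReal.ofReal (|x - y| ^ (1-α)) :=
            ENNReal.div_le_div_left hker _
    refine le_trans ?_ (le_biSup _ hmem)
    have hAne : (A n) ^ (q - ε₁) ≠ ⊤ :=
      (ENNReal.rpow_lt_top_of_nonneg hqε.le (hAlt n).ne).ne
    have step3 : (A n)^(q-ε₁) * W ≤
        ∫⁻ t in Icc (0:ℝ) 1,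
          rieszPotential α (fun y => fN n y * w y ^ α) t ^ (q-ε₁) *
            ENNReal.ofReal (w t) := by
      rw [hW, ← lintegral_const_mul' _ _ hAne]
      apply lintegral_mono_ae
      filter_upwards [ae_restrict_mem measurableSet_Icc] with t ht
      exact mul_le_mul_left (ENNReal.rpow_le_rpow (step1 t ht) hqε.le) _
    have key : (ENNReal.ofReal (ε₁^θ) * W * A n ^ (q-ε₁)) ^ (1/(q-ε₁)) = κ * A n := by
      rw [ENNReal.mul_rpow_of_nonneg _ _ (by positivity),
        ← ENNReal.rpow_mul, mul_one_div_cancel hqε.ne', ENNReal.rpow_one, hκ]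
    have hb2 : ENNReal.ofReal (ε₁^θ) * W * A n ^ (q-ε₁) ≤
        ENNReal.ofReal (ε₁^θ) * ∫⁻ t in Icc (0:ℝ) 1,
          rieszPotential α (fun y => fN n y * w y ^ α) t ^ (q-ε₁) *
            ENNReal.ofReal (w t) := by
      rw [mul_assoc, mul_comm W]
      exact mul_le_mul_right step3 _
    calc κ * A n = (ENNReal.ofReal (ε₁^θ) * W * A n ^ (q-ε₁)) ^ (1/(q-ε₁)) := key.symm
      _ ≤ _ := ENNReal.rpow_le_rpow hb2 (by positivity)
  -- combine
  set E : ℝ≥0∞ := κ⁻¹ * (ENNReal.ofReal c * K) with hE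
  have hEt : E ≠ ⊤ :=
    ENNReal.mul_ne_top (ENNReal.inv_ne_top.mpr hκ0)
      (ENNReal.mul_ne_top ENNReal.ofReal_ne_top hKlt.ne)
  have hAbound : ∀ n, A n ≤ E ^ (p/(p-1)) := by
    intro n
    have h1 : κ * A n ≤ ENNReal.ofReal c * (K * (A n) ^ (1/p)) :=
      le_trans (hLHS n) (le_trans (hb (fN n) (hfN_meas n) (hfN_nonneg n))
        (mul_le_mul_right (hRHS n) _))
    have h2 : A n ≤ E * (A n) ^ (1/p) := by
      calc A n = κ⁻¹ * (κ * A n) := by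
            rw [← mul_assoc, ENNReal.inv_mul_cancel hκ0 hκt, one_mul]
        _ ≤ κ⁻¹ * (ENNReal.ofReal c * (K * (A n)^(1/p))) := mul_le_mul_right h1 _
        _ = E * (A n)^(1/p) := by rw [hE]; ring
    rcases eq_or_ne (A n) 0 with h0 | h0
    · simp [h0]
    · have ht := (hAlt n).ne
      have h3 : (A n) ^ (1/p) * (A n) ^ (1 - 1/p) ≤ (A n) ^ (1/p) * E := by
        calc (A n) ^ (1/p) * (A n) ^ (1 - 1/p) = A n := by
              rw [← ENNReal.rpow_add _ _ h0 ht]; norm_num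
          _ ≤ E * (A n) ^ (1/p) := h2
          _ = (A n) ^ (1/p) * E := mul_comm _ _
      have hr0 : (A n) ^ (1/p) ≠ 0 := by
        simp [ENNReal.rpow_eq_zero_iff, h0, ht]
      have hrt : (A n) ^ (1/p) ≠ ⊤ := by
        exact (ENNReal.rpow_lt_top_of_nonneg (by positivity) ht).ne
      have h4 : (A n) ^ (1 - 1/p) ≤ E := (ENNReal.mul_le_mul_iff_right hr0 hrt).mp h3
      calc A n = ((A n) ^ (1 - 1/p)) ^ (p/(p-1)) := by
            rw [← ENNReal.rpow_mul]
            rw [show (1 - 1/p) * (p/(p-1)) = 1 by field_simp]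
            exact (ENNReal.rpow_one _).symm
        _ ≤ E ^ (p/(p-1)) := ENNReal.rpow_le_rpow h4 (by positivity)
  -- monotone convergence
  have hmono : ∀ᵐ x ∂(volume.restrict (Icc (0:ℝ) 1)),
      Monotone fun n : ℕ => ENNReal.ofReal (fN n x * w x ^ α) := by
    filter_upwards [hw_pos] with x hx
    intro i j hij
    apply ENNReal.ofReal_le_ofReal
    apply mul_le_mul_of_nonneg_right _ (Real.rpow_nonneg hx.le _)
    exact min_le_min (le_refl _) (Nat.cast_le.mpr hij)
  have hsup : ∀ᵐ x ∂(volume.restrict (Icc (0:ℝ) 1)),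
      ENNReal.ofReal (w x ^ (-(p / (p - 1)) / q)) =
        ⨆ n : ℕ, ENNReal.ofReal (fN n x * w x ^ α) := by
    filter_upwards [hw_pos] with x hx
    have hmax : max (w x) 0 = w x := max_eq_left hx.le
    have htar : w x ^ (-β) * w x ^ α = w x ^ (-(p / (p - 1)) / q) := by
      rw [← Real.rpow_add hx, ← hexp]; ring_nf
    apply le_antisymm
    · have hkey : w x ^ (-(p / (p - 1)) / q) =
          fN (⌈(w x)^(-β)⌉₊) x * w x ^ α := by
        rw [hfN]; simp only [hmax]
        rw [min_eq_left (Nat.le_ceil _), htar]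
      rw [hkey]
      exact le_iSup (fun n : ℕ => ENNReal.ofReal (fN n x * w x ^ α)) _
    · apply iSup_le; intro n
      apply ENNReal.ofReal_le_ofReal
      rw [← htar]
      apply mul_le_mul_of_nonneg_right _ (Real.rpow_nonneg hx.le _)
      rw [hfN]; simp only [hmax]; exact min_le_left _ _
  calc (∫⁻ x in Icc (0:ℝ) 1, ENNReal.ofReal (w x ^ (-(p / (p - 1)) / q)))
      = ∫⁻ x in Icc (0:ℝ) 1, ⨆ n : ℕ, ENNReal.ofReal (fN n x * w x ^ α) :=
        lintegral_congr_ae hsup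
    _ = ⨆ n : ℕ, A n := lintegral_iSup' (fun n => by fun_prop) hmono
    _ ≤ E ^ (p/(p-1)) := iSup_le hAbound
    _ < ⊤ := ENNReal.rpow_lt_top_of_nonneg (by positivity) hEt
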